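/- For any conjunction C of ground literals, ground comparisons, and closed aggregate expressions, and for any list X of distinct variables containing all variables occurring in C, the infinitary formula τC is satisfied by exactly the same interpretations of the vocabulary of C as the formula φ^X C. -/

import Mathlib

namespace EG


/-! ### Relation symbols -/

inductive Rel : Type where
  | req | rne | rlt | rle | rgt | rge

/-- Evaluation of a relation symbol relative to a strict total order `lt`
on the domain (equality is genuine equality of domain elements). -/
def Rel.eval {α : Type} (lt : α → α → Prop) : Rel → α → α → Prop
  | .req, a, b => a = b
  | .rne, a, b => a ≠ b
  | .rlt, a, b => lt a b
  | .rle, a, b => lt a b ∨ a = b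
  | .rgt, a, b => lt b a
  | .rge, a, b => lt b a ∨ a = b

/-! ### Precomputed terms -/

/-- Precomputed terms over a type `C` of symbolic constants:
numerals, symbolic constants, `inf`, `sup`, and applications of a symbolic
constant to a tuple of precomputed terms. -/
inductive Pre (C : Type) : Type where
  | inf
  | sup
  | num (n : ℤ)
  | sym (c : C)
  | app (f : C) (args : List (Pre C))

/-- The assumed total order on precomputed terms: a strict total order with
`inf` least, `sup` greatest, in which numerals are ordered as the integers. -/
structure PreOrderOK {C : Type} (lt : Pre C → Pre C → Prop) : Prop where
  irrefl : ∀ a, ¬ lt a a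
  trans : ∀ a b c, lt a b → lt b c → lt a c
  total : ∀ a b, lt a b ∨ a = b ∨ lt b a
  inf_least : ∀ a, a ≠ Pre.inf → lt Pre.inf a
  sup_greatest : ∀ a, a ≠ Pre.sup → lt a Pre.sup
  num_iff : ∀ m n : ℤ, (lt (Pre.num m) (Pre.num n) ↔ m < n)

/-- Atoms `p(r)` where `r` is a tuple of precomputed terms. -/
abbrev EGAtom (C : Type) := C × List (Pre C)

/-- An interpretation is a set of atoms over precomputed terms. -/
abbrev Interp (C : Type) := Set (EGAtom C)

/-- Valuations: variables (natural numbers) ↦ precomputed terms. -/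
abbrev Val (C : Type) := ℕ → Pre C

/-- Simultaneously update a valuation on a list of variables by a list of values. -/
def updList {C : Type} : Val C → List ℕ → List (Pre C) → Val C
  | v, [], _ => v
  | v, _ :: _, [] => v
  | v, x :: xs, r :: rs => Function.update (updList v xs rs) x r

/-! ### Terms -/

/-- Terms over symbolic constants `C` and operation names `O`. -/
inductive Term (C O : Type) : Type where
  | num (n : ℤ)
  | sym (c : C)
  | var (x : ℕ)
  | inf
  | sup
  | app (f : C) (ts : List (Term C O))
  | op (o : O) (ts : List (Term C O))
  | interval (t₁ t₂ : Term C O)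

mutual
/-- The list of variables occurring in a term. -/
def Term.varList {C O : Type} : Term C O → List ℕ
  | .num _ => []
  | .sym _ => []
  | .var x => [x]
  | .inf => []
  | .sup => []
  | .app _ ts => Term.varListL ts
  | .op _ ts => Term.varListL ts
  | .interval t₁ t₂ => t₁.varList ++ t₂.varList

def Term.varListL {C O : Type} : List (Term C O) → List ℕ
  | [] => []
  | t :: ts => t.varList ++ Term.varListL ts
end

/-- A term (or tuple of terms, etc.) is ground if it contains no variables. -/
def Term.Ground {C O : Type} (t : Term C O) : Prop := t.varList = []

mutual
/-- The set of values of a term under a valuation `v` (for a ground term this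
is the set `[t]` of its values, independent of `v`). `opFun` gives the partial
integer function denoted by each operation name. -/
def Term.val {C O : Type} (opFun : O → List ℤ → Option ℤ) (v : Val C) :
    Term C O → Set (Pre C)
  | .num n => {Pre.num n}
  | .sym c => {Pre.sym c}
  | .var x => {v x}
  | .inf => {Pre.inf}
  | .sup => {Pre.sup}
  | .app f ts => {r | ∃ rs : List (Pre C), Term.vals opFun v ts rs ∧ r = Pre.app f rs}
  | .op o ts => {r | ∃ ks : List ℤ, Term.vals opFun v ts (ks.map Pre.num) ∧
      ∃ m : ℤ, opFun o ks = some m ∧ r = Pre.num m}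
  | .interval t₁ t₂ => {r | ∃ k₁ k₂ m : ℤ, Pre.num k₁ ∈ Term.val opFun v t₁ ∧
      Pre.num k₂ ∈ Term.val opFun v t₂ ∧ k₁ ≤ m ∧ m ≤ k₂ ∧ r = Pre.num m}

/-- `Term.vals opFun v ts rs` : the tuple `rs` of precomputed terms is a tuple of
values of the tuple `ts` of terms (componentwise). -/
def Term.vals {C O : Type} (opFun : O → List ℤ → Option ℤ) (v : Val C) :
    List (Term C O) → List (Pre C) → Prop
  | [], rs => rs = []
  | t :: ts, rs => ∃ r rs', rs = r :: rs' ∧ r ∈ Term.val opFun v t ∧ Term.vals opFun v ts rs'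
end

mutual
/-- Embedding of precomputed terms into terms. -/
def Pre.toTerm {C O : Type} : Pre C → Term C O
  | .inf => .inf
  | .sup => .sup
  | .num n => .num n
  | .sym c => .sym c
  | .app f rs => .app f (Pre.toTermL rs)

def Pre.toTermL {C O : Type} : List (Pre C) → List (Term C O)
  | [] => []
  | r :: rs => Pre.toTerm r :: Pre.toTermL rs
end


/-! ### Formulas with aggregates -/

mutual
/-- Arguments of the extended (aggregate) language. -/
inductive AArg (C O A : Type) : Type where
  | num (n : ℤ)
  | sym (c : C)
  | var (x : ℕ)
  | inf
  | sup
  | app (f : C) (args : List (AArg C O A))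
  | agg (a : A) (xs : List ℕ) (F : AFml C O A)

/-- Formulas of the extended (aggregate) first-order language over the domain
of precomputed terms. -/
inductive AFml (C O A : Type) : Type where
  | atom (p : C) (args : List (AArg C O A))
  | cmp (rel : Rel) (a₁ a₂ : AArg C O A)
  | mem (a : AArg C O A) (t : Term C O)
  | bot
  | impl (F G : AFml C O A)
  | all (x : ℕ) (F : AFml C O A)
end

section Sem
variable {C O A : Type}
variable (opFun : O → List ℤ → Option ℤ)
variable (aggFun : A → Set (List (Pre C)) → Pre C)
variable (lt : Pre C → Pre C → Prop)

mutual
/-- The precomputed term denoted by an argument (joint recursion with `AFml.sat`). -/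
def AArg.eval (I : Interp C) : Val C → AArg C O A → Pre C
  | _, .num n => Pre.num n
  | _, .sym c => Pre.sym c
  | v, .var x => v x
  | _, .inf => Pre.inf
  | _, .sup => Pre.sup
  | v, .app f args => Pre.app f (AArg.evalL I v args)
  | v, .agg a xs F => aggFun a
      {rs : List (Pre C) | rs.length = xs.length ∧ AFml.sat I (updList v xs rs) F}

def AArg.evalL (I : Interp C) : Val C → List (AArg C O A) → List (Pre C)
  | _, [] => []
  | v, a :: as => AArg.eval I v a :: AArg.evalL I v as

/-- Satisfaction of a formula by an interpretation `I` under a valuation `v`. -/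
def AFml.sat (I : Interp C) : Val C → AFml C O A → Prop
  | v, .atom p args => (p, AArg.evalL I v args) ∈ I
  | v, .cmp rel a₁ a₂ => Rel.eval lt rel (AArg.eval I v a₁) (AArg.eval I v a₂)
  | v, .mem a t => AArg.eval I v a ∈ Term.val opFun v t
  | _, .bot => False
  | v, .impl F G => AFml.sat I v F → AFml.sat I v G
  | v, .all x F => ∀ r : Pre C, AFml.sat I (Function.update v x r) F
end

end Sem
/-! ### Infinitary propositional formulas -/

/-- Infinitary propositional formulas over a type `α` of atoms: atoms, `⊥`,
conjunctions and disjunctions of arbitrary families of formulas, implication. -/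
inductive IForm (α : Type) : Type 1 where
  | atom (a : α)
  | bot
  | conj (ι : Type) (f : ι → IForm α)
  | disj (ι : Type) (f : ι → IForm α)
  | impl (F G : IForm α)

namespace IForm

variable {α : Type}

/-- `⊤` as the empty conjunction. -/
def top : IForm α := conj Empty (fun e => e.elim)
def neg (F : IForm α) : IForm α := impl F bot
def and (F G : IForm α) : IForm α := conj Bool (fun b => cond b F G)
def or (F G : IForm α) : IForm α := disj Bool (fun b => cond b F G)
def conjList (l : List (IForm α)) : IForm α := conj (Fin l.length) (fun i => l.get i)

/-- Classical satisfaction of infinitary formulas. -/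
def sat (I : Set α) : IForm α → Prop
  | atom a => a ∈ I
  | bot => False
  | conj _ f => ∀ i, sat I (f i)
  | disj _ f => ∃ i, sat I (f i)
  | impl F G => sat I F → sat I G

open Classical in
/-- The Ferraris reduct of an infinitary formula relative to an interpretation:
every (maximal) subformula not satisfied by `I` is replaced by `⊥`. -/
noncomputable def reduct (I : Set α) : IForm α → IForm α
  | atom a => if a ∈ I then atom a else bot
  | bot => bot
  | conj ι f => conj ι (fun i => reduct I (f i))
  | disj ι f => disj ι (fun i => reduct I (f i))
  | impl F G => if sat I (impl F G) then impl (reduct I F) (reduct I G) else bot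

/-- `I` is a stable model of `F` (Ferraris semantics for infinitary formulas):
`I` is a minimal model of the reduct `F^I`. -/
def stable (I : Set α) (F : IForm α) : Prop :=
  sat I (reduct I F) ∧ ∀ J : Set α, J ⊆ I → sat J (reduct I F) → J = I

/-- Satisfaction in the infinitary logic of here-and-there `HT^∞`, for an
HT-interpretation given by `J ⊆ I` ("here" `J`, "there" `I`). -/
def satHT (J I : Set α) : IForm α → Prop
  | atom a => a ∈ J
  | bot => False
  | conj _ f => ∀ i, satHT J I (f i)
  | disj _ f => ∃ i, satHT J I (f i)
  | impl F G => (satHT J I F → satHT J I G) ∧ (sat I F → sat I G)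

/-- Strong equivalence of infinitary formulas, i.e. equivalence in `HT^∞`. -/
def HTEquiv (F G : IForm α) : Prop :=
  ∀ J I : Set α, J ⊆ I → (satHT J I F ↔ satHT J I G) ∧ (sat I F ↔ sat I G)

mutual
/-- Positive nonnegated atoms of an infinitary formula. -/
def Pnn : IForm α → Set α
  | atom a => {a}
  | bot => ∅
  | conj _ f => ⋃ i, Pnn (f i)
  | disj _ f => ⋃ i, Pnn (f i)
  | impl _ bot => ∅
  | impl G H => Nnn G ∪ Pnn H

/-- Negative nonnegated atoms of an infinitary formula. -/
def Nnn : IForm α → Set α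
  | atom _ => ∅
  | bot => ∅
  | conj _ f => ⋃ i, Nnn (f i)
  | disj _ f => ⋃ i, Nnn (f i)
  | impl _ bot => ∅
  | impl G H => Pnn G ∪ Nnn H
end

end IForm

/-! ### Infinitary programs -/

/-- An infinitary rule `F → A`. -/
structure IRule (α : Type) : Type 1 where
  body : IForm α
  head : α

/-- An infinitary program: a conjunction (represented as a set) of infinitary rules. -/
abbrev IProg (α : Type) := Set (IRule α)

def IRule.toForm {α : Type} (r : IRule α) : IForm α := .impl r.body (.atom r.head)

namespace IProg
variable {α : Type}

/-- `I` satisfies the program (i.e., the conjunction of its rules). -/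
def sat (I : Set α) (P : IProg α) : Prop := ∀ r ∈ P, IForm.sat I r.toForm

/-- `I` is a stable model of the program, i.e., of the conjunction of its rules:
`I` is a minimal model of the reduct of that conjunction. -/
def stable (I : Set α) (P : IProg α) : Prop :=
  (∀ r ∈ P, IForm.sat I (IForm.reduct I r.toForm)) ∧
  ∀ J : Set α, J ⊆ I → (∀ r ∈ P, IForm.sat J (IForm.reduct I r.toForm)) → J = I

/-- `I` is supported by the program. -/
def supported (I : Set α) (P : IProg α) : Prop :=
  ∀ a ∈ I, ∃ r ∈ P, r.head = a ∧ IForm.sat I r.body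

/-- `I` satisfies the completion of `P`, with signature (set of atoms) `S`:
the conjunction over all atoms `A ∈ S` of `A ↔ ⋁ (P|_A)`. -/
def satCompletionOn (S : Set α) (I : Set α) (P : IProg α) : Prop :=
  ∀ a ∈ S, (a ∈ I ↔ ∃ r ∈ P, r.head = a ∧ IForm.sat I r.body)

/-- `B` is a parent of `A` relative to `P` and `I`. -/
def parent (P : IProg α) (I : Set α) (B A : α) : Prop :=
  A ∈ I ∧ B ∈ I ∧ ∃ r ∈ P, r.head = A ∧ IForm.sat I r.body ∧ B ∈ IForm.Pnn r.body

/-- `P` is tight on `I`: there is no infinite sequence of elements of `I` in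
which each element is followed by one of its parents. -/
def tightOn (P : IProg α) (I : Set α) : Prop :=
  ¬ ∃ f : ℕ → α, (∀ i, f i ∈ I) ∧ ∀ i, parent P I (f (i + 1)) (f i)

end IProg
/-! ### Programs -/

/-- A literal: an atom `p(t₁,…,tₙ)` (`pos = true`) or such an atom preceded
by `not` (`pos = false`). -/
structure Lit (C O : Type) : Type where
  pos : Bool
  pred : C
  args : List (Term C O)

/-- A comparison `t₁ ≺ t₂`. -/
structure Comp (C O : Type) : Type where
  rel : Rel
  lhs : Term C O
  rhs : Term C O

/-- An element of the condition of an aggregate expression: a literal or comparison. -/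
abbrev CondElem (C O : Type) := Lit C O ⊕ Comp C O

def Lit.varList {C O : Type} (l : Lit C O) : List ℕ := Term.varListL l.args
def Comp.varList {C O : Type} (c : Comp C O) : List ℕ := c.lhs.varList ++ c.rhs.varList
def CondElem.varList {C O : Type} : CondElem C O → List ℕ :=
  Sum.elim Lit.varList Comp.varList

/-- An aggregate expression `α{t : C} ≺ s`, where `s` is a variable or a
precomputed term. -/
structure AggExpr (C O A : Type) : Type where
  name : A
  ts : List (Term C O)
  cond : List (CondElem C O)
  rel : Rel
  bound : ℕ ⊕ Pre C

def AggExpr.lhsVarList {C O A : Type} (E : AggExpr C O A) : List ℕ :=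
  Term.varListL E.ts ++ E.cond.flatMap CondElem.varList

def boundVarList {C : Type} : ℕ ⊕ Pre C → List ℕ
  | .inl x => [x]
  | .inr _ => []

def AggExpr.varList {C O A : Type} (E : AggExpr C O A) : List ℕ :=
  E.lhsVarList ++ boundVarList E.bound

/-- An aggregate expression is closed if its bound `s` is ground
(i.e., a precomputed term). -/
def AggExpr.ClosedBound {C O A : Type} (E : AggExpr C O A) : Prop :=
  ∃ r : Pre C, E.bound = Sum.inr r

/-- A conjunctive term of a rule body. -/
inductive BElem (C O A : Type) : Type where
  | lit (l : Lit C O)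
  | comp (c : Comp C O)
  | agg (E : AggExpr C O A)

def BElem.varList {C O A : Type} : BElem C O A → List ℕ
  | .lit l => l.varList
  | .comp c => c.varList
  | .agg E => E.varList

/-- A body element suitable for the translation `τ`: a ground literal,
a ground comparison, or a closed aggregate expression. -/
def BElem.ClosedC {C O A : Type} : BElem C O A → Prop
  | .lit l => l.varList = []
  | .comp c => c.varList = []
  | .agg E => E.ClosedBound

/-- The head of a rule. -/
inductive Head (C O : Type) : Type where
  | basic (p : C) (ts : List (Term C O))
  | choice (p : C) (ts : List (Term C O))
  | empty

def Head.varList {C O : Type} : Head C O → List ℕ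
  | .basic _ ts => Term.varListL ts
  | .choice _ ts => Term.varListL ts
  | .empty => []

/-- A rule `Head ← Body`. -/
structure Rule (C O A : Type) : Type where
  head : Head C O
  body : List (BElem C O A)

def Rule.varList {C O A : Type} (R : Rule C O A) : List ℕ :=
  R.head.varList ++ R.body.flatMap BElem.varList

/-- The variables with an occurrence in the rule outside the left-hand sides
`α{t : C}` of aggregate expressions (head, literal and comparison conjuncts,
and bounds of aggregate expressions); these are the global variables. -/
def Rule.globalList {C O A : Type} (R : Rule C O A) : List ℕ :=
  (R.head.varList ++ R.body.flatMap (fun b =>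
    match b with
    | .lit l => l.varList
    | .comp c => c.varList
    | .agg E => boundVarList E.bound)).dedup

/-- The local variables of a rule: those occurring in the rule, all of whose
occurrences are inside left-hand sides of aggregate expressions of its body. -/
def Rule.localList {C O A : Type} (R : Rule C O A) : List ℕ :=
  ((R.body.flatMap (fun b =>
    match b with
    | .agg E => E.lhsVarList
    | _ => [])).dedup).filter (fun x => x ∉ R.globalList)

/-- A rule is closed if all its variables are local. -/
def Rule.Closed {C O A : Type} (R : Rule C O A) : Prop := R.globalList = []

/-! ### Predicate symbol occurrences, vocabulary, dependency graph -/

def Lit.hasPred {C O : Type} (p : C) (n : ℕ) (l : Lit C O) : Prop :=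
  l.pred = p ∧ l.args.length = n

def CondElem.hasPred {C O : Type} (p : C) (n : ℕ) : CondElem C O → Prop
  | .inl l => l.hasPred p n
  | .inr _ => False

def AggExpr.hasPred {C O A : Type} (p : C) (n : ℕ) (E : AggExpr C O A) : Prop :=
  ∃ ce ∈ E.cond, CondElem.hasPred p n ce

/-- The predicate symbol `p/n` occurs in a body element. -/
def BElem.hasPred {C O A : Type} (p : C) (n : ℕ) : BElem C O A → Prop
  | .lit l => l.hasPred p n
  | .comp _ => False
  | .agg E => E.hasPred p n

/-- The predicate symbol `p/n` occurs in a positive literal or in an aggregate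
expression (condition (ii′)). -/
def BElem.hasPosOrAggPred {C O A : Type} (p : C) (n : ℕ) : BElem C O A → Prop
  | .lit l => l.pos = true ∧ l.hasPred p n
  | .comp _ => False
  | .agg E => E.hasPred p n

def Head.hasPred {C O : Type} (p : C) (n : ℕ) : Head C O → Prop
  | .basic q ts => q = p ∧ ts.length = n
  | .choice q ts => q = p ∧ ts.length = n
  | .empty => False

/-- The predicate symbol `p/n` occurs in the rule `R`. -/
def Rule.hasPredSym {C O A : Type} (p : C) (n : ℕ) (R : Rule C O A) : Prop :=
  R.head.hasPred p n ∨ ∃ e ∈ R.body, BElem.hasPred p n e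

/-- The vocabulary of a program: all atoms `p(r)` with `r` a tuple of `n`
precomputed terms and `p/n` occurring in the program. -/
def vocab {C O A : Type} (Γ : Set (Rule C O A)) : Set (EGAtom C) :=
  {a | ∃ R ∈ Γ, Rule.hasPredSym a.1 a.2.length R}

/-- The edge relation of the dependency graph `G_Γ` on predicate symbols. -/
def DepEdge {C O A : Type} (Γ : Set (Rule C O A)) (q p : C × ℕ) : Prop :=
  ∃ R ∈ Γ, R.head.hasPred q.1 q.2 ∧ ∃ e ∈ R.body, BElem.hasPosOrAggPred p.1 p.2 e

/-- A program is tight if its dependency graph is acyclic. -/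
def EGTight {C O A : Type} (Γ : Set (Rule C O A)) : Prop :=
  ∀ s : C × ℕ, ¬ Relation.TransGen (DepEdge Γ) s s


/-! ### Embeddings and aggregate-freeness -/

mutual
/-- Embedding of precomputed terms into arguments of the extended language. -/
def Pre.toAArg {C O A : Type} : Pre C → AArg C O A
  | .inf => .inf
  | .sup => .sup
  | .num n => .num n
  | .sym c => .sym c
  | .app f rs => .app f (Pre.toAArgL rs)

def Pre.toAArgL {C O A : Type} : List (Pre C) → List (AArg C O A)
  | [] => []
  | r :: rs => Pre.toAArg r :: Pre.toAArgL rs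
end

mutual
/-- The number of occurrences of aggregate names in an argument;
an argument is aggregate-free iff this is `0`. -/
def AArg.countAgg {C O A : Type} : AArg C O A → ℕ
  | .num _ => 0
  | .sym _ => 0
  | .var _ => 0
  | .inf => 0
  | .sup => 0
  | .app _ args => AArg.countAggL args
  | .agg _ _ F => F.countAgg + 1

def AArg.countAggL {C O A : Type} : List (AArg C O A) → ℕ
  | [] => 0
  | a :: as => a.countAgg + AArg.countAggL as

def AFml.countAgg {C O A : Type} : AFml C O A → ℕ
  | .atom _ args => AArg.countAggL args
  | .cmp _ a₁ a₂ => a₁.countAgg + a₂.countAgg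
  | .mem a _ => a.countAgg
  | .bot => 0
  | .impl F G => F.countAgg + G.countAgg
  | .all _ F => F.countAgg
end

/-- An argument contains no aggregate names. -/
def AArg.AggFree {C O A : Type} (a : AArg C O A) : Prop := a.countAgg = 0

mutual
/-- An aggregate-free argument, viewed as a term (the `agg` case is junk and
is never relevant for aggregate-free arguments). -/
def AArg.toTerm {C O A : Type} : AArg C O A → Term C O
  | .num n => .num n
  | .sym c => .sym c
  | .var x => .var x
  | .inf => .inf
  | .sup => .sup
  | .app f args => .app f (AArg.toTermL args)
  | .agg _ _ _ => .inf

def AArg.toTermL {C O A : Type} : List (AArg C O A) → List (Term C O)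
  | [] => []
  | a :: as => a.toTerm :: AArg.toTermL as
end

/-! ### Abbreviated connectives of the extended first-order language -/

namespace AFml
variable {C O A : Type}

def negF (F : AFml C O A) : AFml C O A := .impl F .bot
def topF : AFml C O A := negF .bot
def andF (F G : AFml C O A) : AFml C O A := .impl (.impl F (.impl G .bot)) .bot
def orF (F G : AFml C O A) : AFml C O A := .impl (negF F) G
def iffF (F G : AFml C O A) : AFml C O A := andF (.impl F G) (.impl G F)
def exF (x : ℕ) (F : AFml C O A) : AFml C O A := negF (.all x (negF F))
def andList (l : List (AFml C O A)) : AFml C O A := l.foldr andF topF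
def orList (l : List (AFml C O A)) : AFml C O A := l.foldr orF .bot
def exList (xs : List ℕ) (F : AFml C O A) : AFml C O A := xs.foldr exF F
def allList (xs : List ℕ) (F : AFml C O A) : AFml C O A := xs.foldr .all F

end AFml

/-! ### The translation φ (formula representations) -/

/-- A variable index strictly greater than every element of `l`
(used to pick new/fresh variables). -/
def freshVar (l : List ℕ) : ℕ := l.foldr max 0 + 1

/-- The bound `s` of an aggregate expression, as a term. -/
def boundTerm {C O : Type} : ℕ ⊕ Pre C → Term C O
  | .inl x => .var x
  | .inr r => r.toTerm

section Phi
variable {C O A : Type}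

/-- `φ` of a literal: `∃X(X ∈ t ∧ p(X))`, resp. `∃X(X ∈ t ∧ ¬p(X))`,
with `X` a tuple of new variables. -/
def phiLit (l : Lit C O) : AFml C O A :=
  let n := freshVar l.varList
  let ws := (List.range l.args.length).map (· + n)
  AFml.exList ws (AFml.andF
    (AFml.andList ((ws.zip l.args).map (fun q => AFml.mem (AArg.var q.1) q.2)))
    (if l.pos then AFml.atom l.pred (ws.map AArg.var)
     else AFml.negF (AFml.atom l.pred (ws.map AArg.var))))

/-- `φ` of a comparison: `∃X₁X₂(X₁ ∈ t₁ ∧ X₂ ∈ t₂ ∧ X₁ ≺ X₂)`. -/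
def phiComp (c : Comp C O) : AFml C O A :=
  let n := freshVar c.varList
  AFml.exF n (AFml.exF (n + 1) (AFml.andF (AFml.mem (AArg.var n) c.lhs)
    (AFml.andF (AFml.mem (AArg.var (n + 1)) c.rhs)
      (AFml.cmp c.rel (AArg.var n) (AArg.var (n + 1))))))

def phiCondElem : CondElem C O → AFml C O A :=
  Sum.elim phiLit phiComp

/-- `φ` of a conjunction of literals and comparisons. -/
def phiCond (cond : List (CondElem C O)) : AFml C O A :=
  AFml.andList (cond.map phiCondElem)

/-- `φ^X` of an aggregate expression `α{t : C} ≺ s` (with `X = xs` the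
variables treated as local):
`∃Y(α{Z | ∃X(Z ∈ t ∧ φC)} ≺ Y ∧ Y ∈ s)`, with `Z`, `Y` new variables. -/
def phiAgg (xs : List ℕ) (E : AggExpr C O A) : AFml C O A :=
  let n := freshVar (xs ++ E.varList)
  let zs := (List.range E.ts.length).map (· + (n + 1))
  AFml.exF n (AFml.andF
    (AFml.cmp E.rel
      (AArg.agg E.name zs
        (AFml.exList xs (AFml.andF
          (AFml.andList ((zs.zip E.ts).map (fun q => AFml.mem (AArg.var q.1) q.2)))
          (phiCond E.cond))))
      (AArg.var n))
    (AFml.mem (AArg.var n) (boundTerm E.bound)))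

/-- `φ^X` of a body element, where `xs` is the list of variables treated as local. -/
def phiBElem (xs : List ℕ) : BElem C O A → AFml C O A
  | .lit l => phiLit l
  | .comp c => phiComp c
  | .agg E => phiAgg xs E

/-- `φ^X` of a body (a conjunction of literals, comparisons and aggregate
expressions), where `xs` is the list of variables treated as local. -/
def phiBody (xs : List ℕ) (b : List (BElem C O A)) : AFml C O A :=
  AFml.andList (b.map (phiBElem xs))

/-- The formula representation of a constraint `← Body`: `¬ φ^X(Body)`,
where `X` is the list of local variables of the constraint. -/
def phiConstraintRep (R : Rule C O A) : AFml C O A :=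
  AFml.negF (phiBody R.localList R.body)

/-- `V ∈ t` for a tuple `V` of variables and a tuple `t` of terms. -/
def memConj (Vs : List ℕ) (ts : List (Term C O)) : AFml C O A :=
  AFml.andList ((Vs.zip ts).map (fun q => AFml.mem (AArg.var q.1) q.2))

/-- The antecedent `Fᵢ` of the formula representation `Fᵢ → p(V)` of a basic or
choice rule, where `Vs` is the chosen tuple `V` of new variables:
for a basic rule `V ∈ t ∧ φ^X(Body)`, for a choice rule
`V ∈ t ∧ φ^X(Body) ∧ p(V)`, with `X` the local variables of the rule. -/
def ruleAnte (Vs : List ℕ) (R : Rule C O A) : AFml C O A :=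
  match R.head with
  | .basic _ ts => AFml.andF (memConj Vs ts) (phiBody R.localList R.body)
  | .choice p ts => AFml.andF (memConj Vs ts)
      (AFml.andF (phiBody R.localList R.body) (AFml.atom p (Vs.map AArg.var)))
  | .empty => AFml.bot

/-- Does `R` belong to the definition of `p/n` (a basic or choice rule whose
head is of the form `p(t₁,…,tₙ)` or `{p(t₁,…,tₙ)}`)? -/
def definesB [DecidableEq C] (p : C) (n : ℕ) (R : Rule C O A) : Bool :=
  match R.head with
  | .basic q ts => decide (q = p ∧ ts.length = n)
  | .choice q ts => decide (q = p ∧ ts.length = n)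
  | .empty => false

/-- The completed definition of the predicate symbol `p/n` in the finite
program `Γ`: `∀V(p(V) ↔ ⋁ᵢ ∃Uᵢ Fᵢ)`, where the `Fᵢ` come from the formula
representations of the rules defining `p/n`, `V` is a tuple of new variables
chosen in the same way for all `i`, and `Uᵢ` is the list of free variables of
`Fᵢ` not in `V` (i.e., the global variables of the corresponding rule). -/
def completedDef [DecidableEq C] (Γ : List (Rule C O A)) (p : C) (n : ℕ) : AFml C O A :=
  let base := freshVar (Γ.flatMap Rule.varList)
  let Vs := (List.range n).map (· + base)
  AFml.allList Vs (AFml.iffF (AFml.atom p (Vs.map AArg.var))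
    (AFml.orList ((Γ.filter (definesB p n)).map
      (fun R => AFml.exList R.globalList (ruleAnte Vs R)))))

end Phi

/-! ### The translation τ (grounding into infinitary formulas) -/

section Tau
variable {C O A : Type}
variable (opFun : O → List ℤ → Option ℤ)
variable (aggFun : A → Set (List (Pre C)) → Pre C)
variable (lt : Pre C → Pre C → Prop)

/-- `τ` of a (ground instance of a) literal: `⋁_{r ∈ [t]} p(r)`, resp.
`⋁_{r ∈ [t]} ¬p(r)`; variables are evaluated by the valuation `v`. -/
def tauLit (v : Val C) (l : Lit C O) : IForm (EGAtom C) :=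
  if l.pos then
    .disj {rs : List (Pre C) // Term.vals opFun v l.args rs}
      (fun rs => .atom (l.pred, rs.val))
  else
    .disj {rs : List (Pre C) // Term.vals opFun v l.args rs}
      (fun rs => .neg (.atom (l.pred, rs.val)))

open Classical in
/-- `τ` of a (ground instance of a) comparison: `⊤` if the relation holds
between some values of the two terms, `⊥` otherwise. -/
noncomputable def tauComp (v : Val C) (c : Comp C O) : IForm (EGAtom C) :=
  if ∃ r₁ ∈ Term.val opFun v c.lhs, ∃ r₂ ∈ Term.val opFun v c.rhs,
      Rel.eval lt c.rel r₁ r₂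
  then .top else .bot

noncomputable def tauCondElem (v : Val C) : CondElem C O → IForm (EGAtom C)
  | .inl l => tauLit opFun v l
  | .inr c => tauComp opFun lt v c

/-- `τ` of a conjunction of (ground instances of) literals and comparisons. -/
noncomputable def tauCond (v : Val C) (cond : List (CondElem C O)) : IForm (EGAtom C) :=
  IForm.conjList (cond.map (tauCondElem opFun lt v))

/-- The value of the bound `s` of an aggregate expression under a valuation. -/
def boundVal (v : Val C) : ℕ ⊕ Pre C → Pre C
  | .inl x => v x
  | .inr r => r

/-- Tuples of precomputed terms matching the variable list `xs`. -/
def AggTuple (C : Type) (xs : List ℕ) : Type := {rs : List (Pre C) // rs.length = xs.length}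

/-- `Δ` justifies the aggregate expression `E` (relative to the valuation `v`
and the list `xs` of its variables): `≺` holds between `α̂([Δ])` and `s`,
where `[Δ]` is the union of the value sets of the instantiated tuples `t`. -/
def Justifies (v : Val C) (xs : List ℕ) (E : AggExpr C O A)
    (Δ : Set (AggTuple C xs)) : Prop :=
  Rel.eval lt E.rel
    (aggFun E.name
      {q | ∃ rs ∈ Δ, Term.vals opFun (updList v xs rs.val) E.ts q})
    (boundVal v E.bound)

/-- `τ` of a closed aggregate expression `E`, relative to the list `xs` of its
variables: the conjunction, over all subsets `Δ` of the set `A` of tuples of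
precomputed terms matching `xs` that do not justify `E`, of the implications
`(⋀_{r∈Δ} τ(C^X_r)) → (⋁_{r∈A∖Δ} τ(C^X_r))`. -/
noncomputable def tauAgg (v : Val C) (xs : List ℕ) (E : AggExpr C O A) :
    IForm (EGAtom C) :=
  .conj {Δ : Set (AggTuple C xs) // ¬ Justifies opFun aggFun lt v xs E Δ}
    (fun Δ => .impl
      (.conj {rs : AggTuple C xs // rs ∈ Δ.val}
        (fun rs => tauCond opFun lt (updList v xs rs.val.val) E.cond))
      (.disj {rs : AggTuple C xs // rs ∉ Δ.val}
        (fun rs => tauCond opFun lt (updList v xs rs.val.val) E.cond)))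

/-- `τ` of a closed aggregate expression, with `X` the list of variables
occurring in it. -/
noncomputable def tauAggE (v : Val C) (E : AggExpr C O A) : IForm (EGAtom C) :=
  tauAgg opFun aggFun lt v (E.varList.dedup) E

/-- `τ` of a body element of (an instance of) a rule whose list of local
variables is `loc`; in the instance, the variables occurring in an aggregate
expression `E` are the variables of `E` that are local in the rule. -/
noncomputable def tauBElem (v : Val C) (loc : List ℕ) : BElem C O A → IForm (EGAtom C)
  | .lit l => tauLit opFun v l
  | .comp c => tauComp opFun lt v c
  | .agg E => tauAgg opFun aggFun lt v (E.varList.dedup.filter (· ∈ loc)) E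

/-- `τ` of the body of (an instance of) a rule with local variable list `loc`. -/
noncomputable def tauBody (v : Val C) (loc : List ℕ) (b : List (BElem C O A)) :
    IForm (EGAtom C) :=
  IForm.conjList (b.map (tauBElem opFun aggFun lt v loc))

/-- `τ` of (an instance, given by the valuation `v`, of) a rule. -/
noncomputable def tauRule (v : Val C) (R : Rule C O A) : IForm (EGAtom C) :=
  match R.head with
  | .basic p ts => .impl (tauBody opFun aggFun lt v R.localList R.body)
      (.conj {rs : List (Pre C) // Term.vals opFun v ts rs}
        (fun rs => .atom (p, rs.val)))
  | .choice p ts => .impl (tauBody opFun aggFun lt v R.localList R.body)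
      (.conj {rs : List (Pre C) // Term.vals opFun v ts rs}
        (fun rs => .or (.atom (p, rs.val)) (.neg (.atom (p, rs.val)))))
  | .empty => .neg (tauBody opFun aggFun lt v R.localList R.body)

/-- `τΓ`: the conjunction of `τR` over all instances `R` of the rules of `Γ`
(instances given by valuations of the global variables). -/
noncomputable def tauProg (Γ : Set (Rule C O A)) : IForm (EGAtom C) :=
  .conj ({R : Rule C O A // R ∈ Γ} × Val C)
    (fun z => tauRule opFun aggFun lt z.2 z.1.val)

/-- Stable models of an EG program: stable models of `τΓ`. -/
noncomputable def EGStable (I : Interp C) (Γ : Set (Rule C O A)) : Prop :=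
  IForm.stable I (tauProg opFun aggFun lt Γ)

/-- The infinitary program `τ₁Γ`: the rules `τ(Body) → p(r)` for all instances
of basic rules of `Γ` and all `r ∈ [t]`, together with the rules
`τ(Body) ∧ ¬¬p(r) → p(r)` for all instances of choice rules and all `r ∈ [t]`. -/
noncomputable def tau1 (Γ : Set (Rule C O A)) : IProg (EGAtom C) :=
  {ir | ∃ R ∈ Γ, ∃ v : Val C,
    (∃ p ts rs, R.head = Head.basic p ts ∧ Term.vals opFun v ts rs ∧
      ir = ⟨tauBody opFun aggFun lt v R.localList R.body, (p, rs)⟩) ∨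
    (∃ p ts rs, R.head = Head.choice p ts ∧ Term.vals opFun v ts rs ∧
      ir = ⟨IForm.and (tauBody opFun aggFun lt v R.localList R.body)
              (IForm.neg (IForm.neg (IForm.atom (p, rs)))), (p, rs)⟩)}

/-- The infinitary formula `τ₂Γ`: the conjunction of `¬τ(C)` over all
instances `← C` of the constraints of `Γ`. -/
noncomputable def tau2 (Γ : Set (Rule C O A)) : IForm (EGAtom C) :=
  .conj ({R : Rule C O A // R ∈ Γ ∧ R.head = Head.empty} × Val C)
    (fun z => .neg (tauBody opFun aggFun lt z.2 z.1.val.localList z.1.val.body))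

/-- `τ` of a closed conjunction of ground literals, ground comparisons and
closed aggregate expressions (each aggregate expression translated relative
to the list of its own variables). -/
noncomputable def tauBElemC (v : Val C) : BElem C O A → IForm (EGAtom C)
  | .lit l => tauLit opFun v l
  | .comp c => tauComp opFun lt v c
  | .agg E => tauAggE opFun aggFun lt v E

noncomputable def tauBodyC (v : Val C) (b : List (BElem C O A)) : IForm (EGAtom C) :=
  IForm.conjList (b.map (tauBElemC opFun aggFun lt v))

end Tau

/-! ### Completion of an EG program -/

section Completion
variable {C O A : Type}
variable (opFun : O → List ℤ → Option ℤ)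
variable (aggFun : A → Set (List (Pre C)) → Pre C)
variable (lt : Pre C → Pre C → Prop)

/-- `I` satisfies the completion of the finite program `Γ`: the completed
definitions of all predicate symbols occurring in `Γ` together with the
universal closures of the formula representations of all constraints of `Γ`. -/
def SatCompletion [DecidableEq C] (Γ : List (Rule C O A)) (I : Interp C) : Prop :=
  (∀ (p : C) (n : ℕ), (∃ R ∈ Γ, Rule.hasPredSym p n R) →
    ∀ v : Val C, AFml.sat opFun aggFun lt I v (completedDef Γ p n)) ∧
  (∀ R ∈ Γ, R.head = Head.empty →
    ∀ v : Val C, AFml.sat opFun aggFun lt I v (phiConstraintRep R))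

end Completion

/-
A ground literal or comparison says, under `τ` as under `φ`, that some values of its terms stand
in the required relation; `φ` merely names these values by existentially quantified new variables.
For a closed aggregate expression, `τ` holds in `I` iff the set `S` of tuples whose instance of the
condition holds in `I` justifies the expression: if it does not, `Δ = S` falsifies the conjunct
indexed by `S`, and if it does, every non-justifying `Δ` differs from `S`, which makes its conjunct
true. In `φ^X` the aggregate is applied to the values of `t` over all instances of `X` satisfying
the condition, and since `X` contains every variable of the expression this is the set of values
over `S` again.
-/

section Translations

variable {C O A : Type} {opFun : O → List ℤ → Option ℤ}
  {aggFun : A → Set (List (Pre C)) → Pre C} {lt : Pre C → Pre C → Prop}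
  {I : Interp C}

theorem lt_freshVar {x : ℕ} {l : List ℕ} (h : x ∈ l) : x < freshVar l :=
  Nat.lt_succ_of_le (List.le_max_of_le h le_rfl)

theorem updList_apply_of_notMem {v : Val C} {x : ℕ} :
    ∀ {xs : List ℕ} {q : List (Pre C)}, x ∉ xs → updList v xs q x = v x
  | [], _, _ => rfl
  | _ :: _, [], _ => rfl
  | _ :: _, _ :: _, hx => by
    rw [List.mem_cons, not_or] at hx
    rw [updList, Function.update_of_ne hx.1, updList_apply_of_notMem hx.2]

theorem updList_map_apply {v : Val C} (f : ℕ → Pre C) {x : ℕ} :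
    ∀ {xs : List ℕ}, x ∈ xs → updList v xs (xs.map f) x = f x
  | y :: xs, hx => by
    rw [List.map_cons, updList, Function.update_apply]
    split_ifs with hxy
    · rw [hxy]
    · exact updList_map_apply f ((List.mem_cons.1 hx).resolve_left hxy)

theorem map_updList {v : Val C} :
    ∀ {xs : List ℕ} {q : List (Pre C)}, xs.Nodup → q.length = xs.length →
      xs.map (updList v xs q) = q
  | [], [], _, _ => rfl
  | x :: xs, r :: q, hnd, hq => by
    rw [List.nodup_cons] at hnd
    have hrest : ∀ y ∈ xs, updList v (x :: xs) (r :: q) y = updList v xs q y := fun y hy =>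
      Function.update_of_ne (by rintro rfl; exact hnd.1 hy) _ _
    rw [List.map_cons, List.map_congr_left hrest, map_updList hnd.2 (Nat.succ_inj.1 hq),
      updList, Function.update_self]

theorem map_updList_updList {w : Val C} {xs zs : List ℕ} {q ps : List (Pre C)}
    (hdisj : ∀ z ∈ zs, z ∉ xs) (hzs : zs.Nodup) (hq : q.length = zs.length) :
    zs.map (updList (updList w zs q) xs ps) = q := by
  rw [List.map_congr_left fun z hz => updList_apply_of_notMem (hdisj z hz), map_updList hzs hq]

theorem updList_update_comm {v : Val C} {x : ℕ} {r : Pre C} :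
    ∀ {xs : List ℕ} {q : List (Pre C)}, x ∉ xs →
      updList (Function.update v x r) xs q = Function.update (updList v xs q) x r
  | [], _, _ => rfl
  | _ :: _, [], _ => rfl
  | _ :: _, _ :: _, hx => by
    rw [List.mem_cons, not_or] at hx
    rw [updList, updList, updList_update_comm hx.2, Function.update_comm (Ne.symm hx.1)]

theorem Term.vals_length {v : Val C} :
    ∀ {ts : List (Term C O)} {q : List (Pre C)}, Term.vals opFun v ts q → q.length = ts.length
  | [], _, h => by rw [Term.vals] at h; rw [h]; rfl
  | _ :: _, _, ⟨_, _, rfl, _, h⟩ => congrArg Nat.succ (Term.vals_length h)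

mutual
theorem Term.val_congr {v v' : Val C} :
    ∀ (t : Term C O), (∀ x ∈ t.varList, v x = v' x) → Term.val opFun v t = Term.val opFun v' t
  | .num _, _ | .sym _, _ | .inf, _ | .sup, _ => rfl
  | .var x, h => by rw [Term.val, Term.val, h x (List.mem_singleton_self x)]
  | .app f ts, h => by
    simp only [Term.val, Term.vals_congr ts h]
  | .op o ts, h => by
    simp only [Term.val, Term.vals_congr ts h]
  | .interval t₁ t₂, h => by
    simp only [Term.varList, List.mem_append] at h
    simp only [Term.val, Term.val_congr t₁ fun x hx => h x (Or.inl hx),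
      Term.val_congr t₂ fun x hx => h x (Or.inr hx)]

theorem Term.vals_congr {v v' : Val C} :
    ∀ (ts : List (Term C O)), (∀ x ∈ Term.varListL ts, v x = v' x) →
      ∀ q, Term.vals opFun v ts q ↔ Term.vals opFun v' ts q
  | [], _, _ => Iff.rfl
  | t :: ts, h, _ => by
    simp only [Term.varListL, List.mem_append] at h
    simp only [Term.vals, Term.val_congr t fun x hx => h x (Or.inl hx),
      Term.vals_congr ts fun x hx => h x (Or.inr hx)]
end

mutual
theorem Pre.val_toTerm {v : Val C} :
    ∀ r : Pre C, Term.val opFun v (Pre.toTerm r : Term C O) = {r}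
  | .inf | .sup | .num _ | .sym _ => rfl
  | .app f rs => by
    ext q
    simp [Pre.toTerm, Term.val, Pre.vals_toTermL rs]

theorem Pre.vals_toTermL {v : Val C} :
    ∀ (rs qs : List (Pre C)), Term.vals opFun v (Pre.toTermL rs : List (Term C O)) qs ↔ qs = rs
  | [], qs => by rw [Pre.toTermL, Term.vals]
  | r :: rs, qs => by
    simp [Pre.toTermL, Term.vals, Pre.val_toTerm r, Pre.vals_toTermL rs]
end

theorem IForm.sat_top {α : Type} {J : Set α} : IForm.sat J IForm.top :=
  fun i => i.elim

theorem IForm.sat_neg {α : Type} {J : Set α} {F : IForm α} :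
    IForm.sat J F.neg ↔ ¬ IForm.sat J F :=
  Iff.rfl

theorem IForm.sat_conjList {α : Type} {J : Set α} {l : List (IForm α)} :
    IForm.sat J (IForm.conjList l) ↔ ∀ F ∈ l, IForm.sat J F := by
  simp only [IForm.conjList, IForm.sat, List.forall_mem_iff_get]

theorem AFml.sat_negF {v : Val C} {F : AFml C O A} :
    AFml.sat opFun aggFun lt I v F.negF ↔ ¬ AFml.sat opFun aggFun lt I v F :=
  Iff.rfl

theorem AFml.sat_topF {v : Val C} : AFml.sat opFun aggFun lt I v (AFml.topF : AFml C O A) :=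
  id

theorem AFml.sat_andF {v : Val C} {F G : AFml C O A} :
    AFml.sat opFun aggFun lt I v (F.andF G) ↔
      AFml.sat opFun aggFun lt I v F ∧ AFml.sat opFun aggFun lt I v G := by
  simp only [AFml.andF, AFml.sat]
  tauto

theorem AFml.sat_andList {v : Val C} {l : List (AFml C O A)} :
    AFml.sat opFun aggFun lt I v (AFml.andList l) ↔ ∀ F ∈ l, AFml.sat opFun aggFun lt I v F := by
  induction l with
  | nil => exact iff_of_true AFml.sat_topF (by simp)
  | cons F l ih => rw [AFml.andList, List.foldr_cons, AFml.sat_andF, ← AFml.andList, ih,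
      List.forall_mem_cons]

theorem AFml.sat_exF {v : Val C} {x : ℕ} {F : AFml C O A} :
    AFml.sat opFun aggFun lt I v (AFml.exF x F) ↔
      ∃ r, AFml.sat opFun aggFun lt I (Function.update v x r) F := by
  simp only [AFml.exF, AFml.sat_negF, AFml.sat, not_forall, not_not]

theorem AFml.sat_exList {F : AFml C O A} :
    ∀ {xs : List ℕ} {v : Val C}, xs.Nodup →
      (AFml.sat opFun aggFun lt I v (AFml.exList xs F) ↔
        ∃ q : List (Pre C), q.length = xs.length ∧
          AFml.sat opFun aggFun lt I (updList v xs q) F)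
  | [], _, _ => ⟨fun h => ⟨[], rfl, h⟩, fun ⟨_, _, h⟩ => h⟩
  | x :: xs, v, hnd => by
    rw [List.nodup_cons] at hnd
    rw [show AFml.exList (x :: xs) F = AFml.exF x (AFml.exList xs F) from rfl, AFml.sat_exF]
    simp only [AFml.sat_exList hnd.2, updList_update_comm hnd.1]
    constructor
    · rintro ⟨r, q, hq, h⟩
      exact ⟨r :: q, congrArg Nat.succ hq, h⟩
    · rintro ⟨_ | ⟨r, q⟩, hq, h⟩
      · exact absurd hq (Nat.succ_ne_zero _).symm
      · exact ⟨r, q, Nat.succ_inj.1 hq, h⟩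

theorem AArg.evalL_map_var {v : Val C} (ws : List ℕ) :
    AArg.evalL opFun aggFun lt I v (ws.map (AArg.var : ℕ → AArg C O A)) = ws.map v := by
  induction ws with
  | nil => rfl
  | cons w ws ih => rw [List.map_cons, List.map_cons, AArg.evalL, AArg.eval, ih]

theorem AFml.sat_memConj :
    ∀ {zs : List ℕ} {ts : List (Term C O)} {v : Val C}, zs.length = ts.length →
      (AFml.sat opFun aggFun lt I v (memConj zs ts : AFml C O A) ↔
        Term.vals opFun v ts (zs.map v))
  | [], [], _, _ => iff_of_true AFml.sat_topF rfl
  | z :: zs, t :: ts, v, hlen => by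
    have ih := AFml.sat_memConj (v := v) (Nat.succ_inj.1 hlen)
    simp only [memConj, AFml.andList] at ih
    simp only [memConj, List.zip_cons_cons, List.map_cons, AFml.andList, List.foldr_cons,
      AFml.sat_andF, ih, AFml.sat, AArg.eval, Term.vals, List.cons.injEq]
    constructor
    · rintro ⟨h₁, h₂⟩
      exact ⟨_, _, ⟨rfl, rfl⟩, h₁, h₂⟩
    · rintro ⟨_, _, ⟨rfl, rfl⟩, h₁, h₂⟩
      exact ⟨h₁, h₂⟩

theorem AFml.sat_exList_andF_memConj {ws : List ℕ} {ts : List (Term C O)} {F : AFml C O A}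
    {v : Val C} (hnd : ws.Nodup) (hlen : ws.length = ts.length)
    (hfresh : ∀ x ∈ Term.varListL ts, x ∉ ws) :
    AFml.sat opFun aggFun lt I v (AFml.exList ws ((memConj ws ts).andF F)) ↔
      ∃ q, Term.vals opFun v ts q ∧ AFml.sat opFun aggFun lt I (updList v ws q) F := by
  have hmem : ∀ q : List (Pre C), q.length = ws.length →
      (AFml.sat opFun aggFun lt I (updList v ws q) (memConj ws ts : AFml C O A) ↔
        Term.vals opFun v ts q) := fun q hq => by
    rw [AFml.sat_memConj hlen, map_updList hnd hq]
    exact Term.vals_congr ts (fun x hx => updList_apply_of_notMem (hfresh x hx)) q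
  rw [AFml.sat_exList hnd]
  constructor
  · rintro ⟨q, hq, h⟩
    rw [AFml.sat_andF, hmem q hq] at h
    exact ⟨q, h⟩
  · rintro ⟨q, hvals, h⟩
    have hq : q.length = ws.length := (Term.vals_length hvals).trans hlen.symm
    exact ⟨q, hq, AFml.sat_andF.2 ⟨(hmem q hq).2 hvals, h⟩⟩

variable (opFun) in
def Lit.Holds (I : Interp C) (v : Val C) (l : Lit C O) : Prop :=
  ∃ q, Term.vals opFun v l.args q ∧ if l.pos then (l.pred, q) ∈ I else (l.pred, q) ∉ I

variable (opFun lt) in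
def Comp.Holds (v : Val C) (c : Comp C O) : Prop :=
  ∃ r₁ ∈ Term.val opFun v c.lhs, ∃ r₂ ∈ Term.val opFun v c.rhs, Rel.eval lt c.rel r₁ r₂

theorem Lit.holds_congr {v v' : Val C} {l : Lit C O} (h : ∀ x ∈ l.varList, v x = v' x) :
    l.Holds opFun I v ↔ l.Holds opFun I v' :=
  exists_congr fun q => and_congr_left' (Term.vals_congr l.args h q)

theorem Comp.holds_congr {v v' : Val C} {c : Comp C O} (h : ∀ x ∈ c.varList, v x = v' x) :
    c.Holds opFun lt v ↔ c.Holds opFun lt v' := by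
  simp only [Comp.varList, List.mem_append] at h
  rw [Comp.Holds, Comp.Holds, Term.val_congr c.lhs fun x hx => h x (Or.inl hx),
    Term.val_congr c.rhs fun x hx => h x (Or.inr hx)]

theorem sat_tauLit {v : Val C} {l : Lit C O} :
    IForm.sat I (tauLit opFun v l) ↔ l.Holds opFun I v := by
  cases hpos : l.pos <;> simp [tauLit, Lit.Holds, hpos, IForm.sat, IForm.sat_neg]

theorem sat_phiLit {v : Val C} {l : Lit C O} :
    AFml.sat opFun aggFun lt I v (phiLit l) ↔ l.Holds opFun I v := by
  set ws := (List.range l.args.length).map (· + freshVar l.varList)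
  have hnd : ws.Nodup := List.nodup_range.map (add_left_injective _)
  have hlen : ws.length = l.args.length := by simp [ws]
  have hfresh : ∀ x ∈ Term.varListL l.args, x ∉ ws := fun x hx hxw => by
    obtain ⟨i, -, rfl⟩ := List.mem_map.1 hxw
    exact absurd (lt_freshVar (l := l.varList) hx) (by omega)
  have hphi : (phiLit l : AFml C O A) = AFml.exList ws ((memConj ws l.args).andF
      (if l.pos then .atom l.pred (ws.map .var) else (AFml.atom l.pred (ws.map .var)).negF)) :=
    rfl
  rw [hphi]
  refine (AFml.sat_exList_andF_memConj hnd hlen hfresh).trans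
    (exists_congr fun q => and_congr_right fun hq => ?_)
  have heval : AArg.evalL opFun aggFun lt I (updList v ws q) (ws.map AArg.var) = q := by
    rw [AArg.evalL_map_var, map_updList hnd (by rw [Term.vals_length hq, hlen])]
  cases l.pos <;> simp only [Bool.false_eq_true, ↓reduceIte, AFml.sat_negF, AFml.sat, heval]

theorem sat_tauComp {v : Val C} {c : Comp C O} :
    IForm.sat I (tauComp opFun lt v c) ↔ c.Holds opFun lt v := by
  rw [tauComp]
  split_ifs with h
  · exact iff_of_true IForm.sat_top h
  · exact iff_of_false id h

theorem sat_phiComp {v : Val C} {c : Comp C O} :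
    AFml.sat opFun aggFun lt I v (phiComp c) ↔ c.Holds opFun lt v := by
  simp only [phiComp, AFml.sat_exF, AFml.sat_andF, AFml.sat, AArg.eval, Function.update_self]
  set n := freshVar c.varList
  have hval : ∀ (t : Term C O) r₁ r₂, (∀ x ∈ t.varList, x ∈ c.varList) →
      Term.val opFun (Function.update (Function.update v n r₁) (n + 1) r₂) t =
        Term.val opFun v t := fun t r₁ r₂ ht => Term.val_congr t fun x hx => by
    have := lt_freshVar (ht x hx)
    rw [Function.update_of_ne (by omega), Function.update_of_ne (by omega)]
  simp only [Function.update_of_ne (Nat.succ_ne_self n).symm, Function.update_self,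
    hval c.lhs _ _ fun x hx => List.mem_append_left _ hx,
    hval c.rhs _ _ fun x hx => List.mem_append_right _ hx]
  constructor
  · rintro ⟨r₁, r₂, h₁, h₂, h⟩
    exact ⟨r₁, h₁, r₂, h₂, h⟩
  · rintro ⟨r₁, h₁, r₂, h₂, h⟩
    exact ⟨r₁, r₂, h₁, h₂, h⟩

theorem sat_tauCondElem_iff_sat_phiCondElem {w : Val C} {ce : CondElem C O} :
    IForm.sat I (tauCondElem opFun lt w ce) ↔ AFml.sat opFun aggFun lt I w (phiCondElem ce) := by
  cases ce with
  | inl l => exact sat_tauLit.trans sat_phiLit.symm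
  | inr c => exact sat_tauComp.trans sat_phiComp.symm

theorem sat_tauCondElem_congr {w w' : Val C} {ce : CondElem C O}
    (h : ∀ x ∈ ce.varList, w x = w' x) :
    IForm.sat I (tauCondElem opFun lt w ce) ↔ IForm.sat I (tauCondElem opFun lt w' ce) := by
  cases ce with
  | inl l => exact sat_tauLit.trans ((Lit.holds_congr h).trans sat_tauLit.symm)
  | inr c => exact sat_tauComp.trans ((Comp.holds_congr h).trans sat_tauComp.symm)

theorem sat_tauCond_iff_sat_phiCond {w : Val C} {cond : List (CondElem C O)} :
    IForm.sat I (tauCond opFun lt w cond) ↔ AFml.sat opFun aggFun lt I w (phiCond cond) := by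
  rw [tauCond, phiCond, IForm.sat_conjList, AFml.sat_andList, List.forall_mem_map,
    List.forall_mem_map]
  exact forall₂_congr fun _ _ => sat_tauCondElem_iff_sat_phiCondElem

theorem sat_tauCond_congr {w w' : Val C} {cond : List (CondElem C O)}
    (h : ∀ ce ∈ cond, ∀ x ∈ ce.varList, w x = w' x) :
    IForm.sat I (tauCond opFun lt w cond) ↔ IForm.sat I (tauCond opFun lt w' cond) := by
  rw [tauCond, tauCond, IForm.sat_conjList, IForm.sat_conjList, List.forall_mem_map,
    List.forall_mem_map]
  exact forall₂_congr fun ce hce => sat_tauCondElem_congr (h ce hce)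

theorem exists_updList_iff {P : Val C → Prop} {ys : List ℕ}
    (hP : ∀ u u', (∀ x ∈ ys, u x = u' x) → P u → P u') (v : Val C) :
    (∃ rs : List (Pre C), rs.length = ys.length ∧ P (updList v ys rs)) ↔ ∃ u, P u :=
  ⟨fun ⟨_, _, h⟩ => ⟨_, h⟩, fun ⟨u, h⟩ =>
    ⟨ys.map u, List.length_map u, hP u _ (fun _ hx => (updList_map_apply u hx).symm) h⟩⟩

variable (opFun lt) in
def AggExpr.valueSet (I : Interp C) (E : AggExpr C O A) : Set (List (Pre C)) :=
  {q | ∃ u : Val C, IForm.sat I (tauCond opFun lt u E.cond) ∧ Term.vals opFun u E.ts q}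

theorem AggExpr.mem_valueSet_iff {E : AggExpr C O A} {ys : List ℕ}
    (hys : ∀ x ∈ E.lhsVarList, x ∈ ys) (v : Val C) {q : List (Pre C)} :
    q ∈ E.valueSet opFun lt I ↔ ∃ rs : List (Pre C), rs.length = ys.length ∧
      IForm.sat I (tauCond opFun lt (updList v ys rs) E.cond) ∧
        Term.vals opFun (updList v ys rs) E.ts q := by
  refine (exists_updList_iff (fun u u' h ⟨hcond, hvals⟩ => ⟨?_, ?_⟩) v).symm
  · refine (sat_tauCond_congr fun ce hce x hx => h x (hys x ?_)).1 hcond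
    exact List.mem_append_right _ (List.mem_flatMap.2 ⟨ce, hce, hx⟩)
  · exact (Term.vals_congr E.ts (fun x hx => h x (hys x (List.mem_append_left _ hx))) q).1 hvals

theorem sat_tauAgg {v : Val C} {ys : List ℕ} {E : AggExpr C O A} :
    IForm.sat I (tauAgg opFun aggFun lt v ys E) ↔
      Justifies opFun aggFun lt v ys E
        {rs | IForm.sat I (tauCond opFun lt (updList v ys rs.val) E.cond)} := by
  set S : Set (AggTuple C ys) := {rs | IForm.sat I (tauCond opFun lt (updList v ys rs.val) E.cond)}
  constructor
  · intro h
    by_contra hS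
    obtain ⟨⟨rs, hrs⟩, hsat⟩ := h ⟨S, hS⟩ fun rs => rs.property
    exact hrs hsat
  · intro hJ Δ hΔ
    by_contra hnone
    have hΔS : Δ.val = S := Set.Subset.antisymm (fun rs hrs => hΔ ⟨rs, hrs⟩)
      fun rs hrs => by_contra fun hmem => hnone ⟨⟨rs, hmem⟩, hrs⟩
    exact Δ.property (hΔS ▸ hJ)

theorem sat_tauAggE {v : Val C} {E : AggExpr C O A} :
    IForm.sat I (tauAggE opFun aggFun lt v E) ↔
      Rel.eval lt E.rel (aggFun E.name (E.valueSet opFun lt I)) (boundVal v E.bound) := by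
  rw [tauAggE, sat_tauAgg, Justifies]
  congr!
  ext q
  rw [E.mem_valueSet_iff (ys := E.varList.dedup)
    (fun x hx => List.mem_dedup.2 (List.mem_append_left _ hx)) v]
  constructor
  · rintro ⟨⟨rs, hlen⟩, hcond, hvals⟩
    exact ⟨rs, hlen, hcond, hvals⟩
  · rintro ⟨rs, hlen, hcond, hvals⟩
    exact ⟨⟨rs, hlen⟩, hcond, hvals⟩

theorem AggExpr.setOf_sat_exList_eq_valueSet {E : AggExpr C O A} {xs zs : List ℕ}
    (hxs : xs.Nodup) (hzs : zs.Nodup) (hdisj : ∀ z ∈ zs, z ∉ xs)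
    (hlen : zs.length = E.ts.length) (hsub : ∀ x ∈ E.lhsVarList, x ∈ xs) (w : Val C) :
    {q | q.length = zs.length ∧ AFml.sat opFun aggFun lt I (updList w zs q)
      (AFml.exList xs ((memConj zs E.ts).andF (phiCond E.cond)))} = E.valueSet opFun lt I := by
  ext q
  rw [E.mem_valueSet_iff hsub (updList w zs q)]
  constructor
  · rintro ⟨hq, h⟩
    obtain ⟨ps, hps, h⟩ := (AFml.sat_exList hxs).1 h
    rw [AFml.sat_andF, AFml.sat_memConj hlen, map_updList_updList hdisj hzs hq,
      ← sat_tauCond_iff_sat_phiCond] at h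
    exact ⟨ps, hps, h.2, h.1⟩
  · rintro ⟨ps, hps, hcond, hvals⟩
    have hq : q.length = zs.length := (Term.vals_length hvals).trans hlen.symm
    refine ⟨hq, (AFml.sat_exList hxs).2 ⟨ps, hps, ?_⟩⟩
    rw [AFml.sat_andF, AFml.sat_memConj hlen, map_updList_updList hdisj hzs hq,
      ← sat_tauCond_iff_sat_phiCond]
    exact ⟨hvals, hcond⟩

theorem sat_phiAgg {v : Val C} {xs : List ℕ} {E : AggExpr C O A} {r : Pre C}
    (hxs : xs.Nodup) (hsub : ∀ x ∈ E.lhsVarList, x ∈ xs) (hb : E.bound = .inr r) :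
    AFml.sat opFun aggFun lt I v (phiAgg xs E) ↔
      Rel.eval lt E.rel (aggFun E.name (E.valueSet opFun lt I)) r := by
  set n := freshVar (xs ++ E.varList)
  set zs := (List.range E.ts.length).map (· + (n + 1))
  have hzs : zs.Nodup := List.nodup_range.map (add_left_injective _)
  have hdisj : ∀ z ∈ zs, z ∉ xs := fun z hz hzx => by
    obtain ⟨i, -, rfl⟩ := List.mem_map.1 hz
    exact absurd (lt_freshVar (List.mem_append_left E.varList hzx)) (by omega)
  have hphi : phiAgg xs E = AFml.exF n ((AFml.cmp E.rel (.agg E.name zs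
      (AFml.exList xs ((memConj zs E.ts).andF (phiCond E.cond)))) (.var n)).andF
      (.mem (.var n) (boundTerm E.bound))) :=
    rfl
  simp only [hphi, AFml.sat_exF, AFml.sat_andF, AFml.sat, AArg.eval,
    E.setOf_sat_exList_eq_valueSet hxs hzs hdisj (by simp [zs]) hsub, hb, boundTerm,
    Pre.val_toTerm, Function.update_self, Set.mem_singleton_iff, exists_eq_right]

theorem sat_tauBElemC_iff_sat_phiBElem {e : BElem C O A} {xs : List ℕ} (he : e.ClosedC)
    (hxs : xs.Nodup) (hsub : ∀ x ∈ e.varList, x ∈ xs) (v v' : Val C) :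
    IForm.sat I (tauBElemC opFun aggFun lt v e) ↔
      AFml.sat opFun aggFun lt I v' (phiBElem xs e) := by
  cases e with
  | lit l =>
    refine sat_tauLit.trans ((Lit.holds_congr fun x hx => ?_).trans sat_phiLit.symm)
    exact absurd hx (he ▸ List.not_mem_nil)
  | comp c =>
    refine sat_tauComp.trans ((Comp.holds_congr fun x hx => ?_).trans sat_phiComp.symm)
    exact absurd hx (he ▸ List.not_mem_nil)
  | agg E =>
    obtain ⟨r, hr⟩ := he
    rw [tauBElemC, phiBElem, sat_tauAggE, sat_phiAgg hxs (fun x hx => hsub x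
      (List.mem_append_left _ hx)) hr, hr, boundVal]

end Translations

/-- Lemma 3: for any conjunction `C` of ground literals, ground
comparisons and closed aggregate expressions, and any list `xs` of distinct
variables containing all variables occurring in `C`, the infinitary formula
`τC` is satisfied by the same interpretations of the vocabulary of `C` as the
formula `φ^X C`. -/
theorem lemma_3 {C O A : Type}
    (opFun : O → List ℤ → Option ℤ)
    (aggFun : A → Set (List (Pre C)) → Pre C)
    (lt : Pre C → Pre C → Prop) (hlt : PreOrderOK lt)
    (b : List (BElem C O A)) (hclosed : ∀ e ∈ b, BElem.ClosedC e)
    (xs : List ℕ) (hxs_nodup : xs.Nodup)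
    (hxs : ∀ x : ℕ, (∃ e ∈ b, x ∈ BElem.varList e) → x ∈ xs)
    (I : Interp C)
    (hI : I ⊆ {a : EGAtom C | ∃ e ∈ b, BElem.hasPred a.1 a.2.length e})
    (v v' : Val C) :
    IForm.sat I (tauBodyC opFun aggFun lt v b) ↔
      AFml.sat opFun aggFun lt I v' (phiBody xs b) := by
  rw [tauBodyC, phiBody, IForm.sat_conjList, AFml.sat_andList, List.forall_mem_map,
    List.forall_mem_map]
  exact forall₂_congr fun e he => sat_tauBElemC_iff_sat_phiBElem (hclosed e he) hxs_nodup
    (fun x hx => hxs x ⟨e, he, hx⟩) v v'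

end EG
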